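/- arXiv:2301.01076 — 3 statements merged into one kernel-verified Lean document; each statement's English description precedes it below -/
import Mathlib

section
/- (A-optimality, Theorem 3.) Let n, k ≥ 1, let B : Fin n → ℝ^k, let y : Fin n → ℝ with y i > 0, let θ ∈ ℝ^k, and let H be a symmetric invertible k × k real matrix. For each i set a i = |−(y i)·exp(−⟪B i, θ⟫) + (y i)⁻¹·exp(⟪B i, θ⟫)| and assume a i · ‖H⁻¹ (B i)‖ > 0 for all i. Then over all π : Fin n → ℝ with π i > 0 and ∑ i, π i = 1, the quantity trace( H⁻¹ · (∑ i, ((a i)^2 / π i) · (B i) (B i)ᵀ) · H⁻¹ ) is minimized exactly when π i = a i · ‖H⁻¹ (B i)‖ / (∑ j, a j · ‖H⁻¹ (B j)‖), and the minimum value is (∑ i, a i · ‖H⁻¹ (B i)‖)^2. -/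
open Matrix

noncomputable def euclNorm {k : ℕ} (v : Fin k → ℝ) : ℝ := Real.sqrt (∑ j, v j ^ 2)

lemma euclNorm_sq {k : ℕ} (v : Fin k → ℝ) : euclNorm v ^ 2 = ∑ j, v j ^ 2 :=
  Real.sq_sqrt (Finset.sum_nonneg fun j _ => sq_nonneg _)

lemma trace_one {k : ℕ} (X : Matrix (Fin k) (Fin k) ℝ) (hX : X.IsSymm) (v : Fin k → ℝ) :
    Matrix.trace (X * vecMulVec v v * X) = euclNorm (X *ᵥ v) ^ 2 := by
  have h1 : ∀ p q, X q p = X p q := fun p q => by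
    conv_lhs => rw [← hX]
    simp [Matrix.transpose_apply]
  rw [euclNorm_sq, Matrix.trace_mul_comm]
  simp only [Matrix.trace, Matrix.diag, Matrix.mul_apply, Matrix.vecMulVec_apply,
    Matrix.mulVec, dotProduct]
  rw [Finset.sum_comm]
  refine Finset.sum_congr rfl fun p _ => ?_
  have h2 : ∀ q, (∑ r, X p r * (v r * v q)) = (∑ r, X p r * v r) * v q := fun q => by
    rw [Finset.sum_mul]; exact Finset.sum_congr rfl fun r _ => by ring
  calc ∑ q, X q p * ∑ r, X p r * (v r * v q)
      = ∑ q, (X p q * v q) * (∑ r, X p r * v r) := by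
        refine Finset.sum_congr rfl fun q _ => ?_
        rw [h2 q, h1 p q]; ring
    _ = (∑ q, X p q * v q) ^ 2 := by rw [← Finset.sum_mul, sq]

lemma trace_sum_lemma {n k : ℕ} (X : Matrix (Fin k) (Fin k) ℝ) (hX : X.IsSymm)
    (c : Fin n → ℝ) (B : Fin n → Fin k → ℝ) :
    Matrix.trace (X * (∑ i, c i • vecMulVec (B i) (B i)) * X) =
      ∑ i, c i * euclNorm (X *ᵥ B i) ^ 2 := by
  rw [Matrix.mul_sum, Matrix.sum_mul, Matrix.trace_sum]
  refine Finset.sum_congr rfl fun i _ => ?_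
  rw [Matrix.mul_smul, Matrix.smul_mul, Matrix.trace_smul, trace_one X hX (B i)]
  simp

/-- (A-optimality, Theorem 3.) Over the open probability simplex, the trace of
`H⁻¹ (∑ (aᵢ²/πᵢ) Bᵢ Bᵢᵀ) H⁻¹` is minimized exactly at
`π i = aᵢ‖H⁻¹Bᵢ‖ / ∑ⱼ aⱼ‖H⁻¹Bⱼ‖`, with minimum value `(∑ aᵢ‖H⁻¹Bᵢ‖)²`. -/
theorem stmt2 (n k : ℕ) (hn : 1 ≤ n) (hk : 1 ≤ k)
    (B : Fin n → Fin k → ℝ) (y : Fin n → ℝ) (hy : ∀ i, 0 < y i)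
    (θ : Fin k → ℝ) (H : Matrix (Fin k) (Fin k) ℝ)
    (hsym : H.IsSymm) (hinv : IsUnit H)
    (a : Fin n → ℝ)
    (ha : ∀ i, a i =
      |(-(y i)) * Real.exp (-(B i ⬝ᵥ θ)) + (y i)⁻¹ * Real.exp (B i ⬝ᵥ θ)|)
    (hpos : ∀ i, 0 < a i * euclNorm (H⁻¹ *ᵥ B i)) :
    (∀ π : Fin n → ℝ, (∀ i, 0 < π i) → (∑ i, π i) = 1 →
      (∑ i, a i * euclNorm (H⁻¹ *ᵥ B i)) ^ 2 ≤
        Matrix.trace (H⁻¹ * (∑ i, ((a i) ^ 2 / π i) • vecMulVec (B i) (B i)) * H⁻¹)) ∧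
    (Matrix.trace (H⁻¹ * (∑ i,
        ((a i) ^ 2 / (a i * euclNorm (H⁻¹ *ᵥ B i) / ∑ j, a j * euclNorm (H⁻¹ *ᵥ B j))) •
          vecMulVec (B i) (B i)) * H⁻¹)
      = (∑ i, a i * euclNorm (H⁻¹ *ᵥ B i)) ^ 2) ∧
    (∀ π : Fin n → ℝ, (∀ i, 0 < π i) → (∑ i, π i) = 1 →
      Matrix.trace (H⁻¹ * (∑ i, ((a i) ^ 2 / π i) • vecMulVec (B i) (B i)) * H⁻¹)
        = (∑ i, a i * euclNorm (H⁻¹ *ᵥ B i)) ^ 2 →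
      ∀ i, π i = a i * euclNorm (H⁻¹ *ᵥ B i) / ∑ j, a j * euclNorm (H⁻¹ *ᵥ B j)) := by
  have hXsym : (H⁻¹).IsSymm := by
    rw [Matrix.IsSymm, Matrix.transpose_nonsing_inv, hsym]
  haveI : Nonempty (Fin n) := ⟨⟨0, by omega⟩⟩
  set N : Fin n → ℝ := fun i => euclNorm (H⁻¹ *ᵥ B i) with hN
  set s : Fin n → ℝ := fun i => a i * N i with hs
  set S : ℝ := ∑ j, s j with hS
  have hspos : ∀ i, 0 < s i := hpos
  have hSpos : 0 < S := Finset.sum_pos (fun i _ => hspos i) Finset.univ_nonempty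
  have key : ∀ π : Fin n → ℝ,
      Matrix.trace (H⁻¹ * (∑ i, ((a i) ^ 2 / π i) • vecMulVec (B i) (B i)) * H⁻¹)
        = ∑ i, s i ^ 2 / π i := by
    intro π
    rw [trace_sum_lemma _ hXsym]
    refine Finset.sum_congr rfl fun i _ => ?_
    simp only [hs, hN, mul_pow]
    ring
  have alg : ∀ π : Fin n → ℝ, (∀ i, 0 < π i) → (∑ i, π i) = 1 →
      (∑ i, s i ^ 2 / π i) = S ^ 2 + ∑ i, (s i / Real.sqrt (π i) - S * Real.sqrt (π i)) ^ 2 := by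
    intro π hπ hπ1
    have expand : ∀ i ∈ Finset.univ, (s i / Real.sqrt (π i) - S * Real.sqrt (π i)) ^ 2
        = s i ^ 2 / π i - 2 * S * s i + S ^ 2 * π i := by
      intro i _
      have h0 : 0 < π i := hπ i
      have hsq : Real.sqrt (π i) ^ 2 = π i := Real.sq_sqrt h0.le
      have hne : Real.sqrt (π i) ≠ 0 := by positivity
      have e1 : (s i / Real.sqrt (π i)) ^ 2 = s i ^ 2 / π i := by rw [div_pow, hsq]
      have e2 : s i / Real.sqrt (π i) * (S * Real.sqrt (π i)) = S * s i := by
        field_simp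
      calc (s i / Real.sqrt (π i) - S * Real.sqrt (π i)) ^ 2
          = (s i / Real.sqrt (π i)) ^ 2 - 2 * (s i / Real.sqrt (π i) * (S * Real.sqrt (π i)))
            + S ^ 2 * Real.sqrt (π i) ^ 2 := by ring
        _ = s i ^ 2 / π i - 2 * S * s i + S ^ 2 * π i := by rw [e1, e2, hsq]; ring
    rw [Finset.sum_congr rfl expand, Finset.sum_add_distrib, Finset.sum_sub_distrib,
      ← Finset.mul_sum, ← Finset.mul_sum, hπ1, ← hS]
    ring
  refine ⟨?_, ?_, ?_⟩
  · intro π hπ hπ1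
    rw [key π, alg π hπ hπ1]
    have : 0 ≤ ∑ i, (s i / Real.sqrt (π i) - S * Real.sqrt (π i)) ^ 2 :=
      Finset.sum_nonneg fun i _ => sq_nonneg _
    linarith
  · rw [key]
    have : ∀ i ∈ Finset.univ, s i ^ 2 / (s i / S) = s i * S := by
      intro i _
      have hai : a i ≠ 0 := left_ne_zero_of_mul (hspos i).ne'
      have hNi : N i ≠ 0 := right_ne_zero_of_mul (hspos i).ne'
      field_simp
    rw [Finset.sum_congr rfl this, ← Finset.sum_mul, ← hS, sq]
  · intro π hπ hπ1 heq i
    rw [key π, alg π hπ hπ1] at heq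
    have hz : ∑ i, (s i / Real.sqrt (π i) - S * Real.sqrt (π i)) ^ 2 = 0 := by linarith
    have hterm := (Finset.sum_eq_zero_iff_of_nonneg (fun i _ => sq_nonneg _)).mp hz i
      (Finset.mem_univ i)
    have h0 : 0 < π i := hπ i
    have hsq : Real.sqrt (π i) ^ 2 = π i := Real.sq_sqrt h0.le
    have hne : Real.sqrt (π i) ≠ 0 := by positivity
    have h1 : s i / Real.sqrt (π i) = S * Real.sqrt (π i) := by
      have := pow_eq_zero_iff (n := 2) (by norm_num) |>.mp hterm
      linarith
    have h2 : s i = S * π i := by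
      rw [div_eq_iff hne] at h1
      rw [h1, mul_assoc, ← sq, hsq]
    show π i = s i / S
    rw [h2, mul_comm, mul_div_assoc, div_self hSpos.ne', mul_one]
end

section
/- (L-optimality, Theorem 4.) Let n, k ≥ 1, let B : Fin n → ℝ^k, let y : Fin n → ℝ with y i > 0, and let θ ∈ ℝ^k. For each i set a i = |−(y i)·exp(−⟪B i, θ⟫) + (y i)⁻¹·exp(⟪B i, θ⟫)| and assume a i · ‖B i‖ > 0 for all i. Then over all π : Fin n → ℝ with π i > 0 and ∑ i, π i = 1, the quantity trace( ∑ i, ((a i)^2 / π i) · (B i) (B i)ᵀ ) is minimized exactly when π i = a i · ‖B i‖ / (∑ j, a j · ‖B j‖), and the minimum value is (∑ i, a i · ‖B i‖)^2. -/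
open Matrix

/-- (L-optimality, Theorem 4.) Over the open probability simplex, the trace of
`∑ (aᵢ²/πᵢ) Bᵢ Bᵢᵀ` is minimized exactly at `π i = aᵢ‖Bᵢ‖ / ∑ⱼ aⱼ‖Bⱼ‖`,
with minimum value `(∑ aᵢ‖Bᵢ‖)²`. -/
theorem stmt3 (n k : ℕ) (hn : 1 ≤ n) (hk : 1 ≤ k)
    (B : Fin n → Fin k → ℝ) (y : Fin n → ℝ) (hy : ∀ i, 0 < y i)
    (θ : Fin k → ℝ)
    (a : Fin n → ℝ)
    (ha : ∀ i, a i =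
      |(-(y i)) * Real.exp (-(B i ⬝ᵥ θ)) + (y i)⁻¹ * Real.exp (B i ⬝ᵥ θ)|)
    (hpos : ∀ i, 0 < a i * euclNorm (B i)) :
    (∀ π : Fin n → ℝ, (∀ i, 0 < π i) → (∑ i, π i) = 1 →
      (∑ i, a i * euclNorm (B i)) ^ 2 ≤
        Matrix.trace (∑ i, ((a i) ^ 2 / π i) • vecMulVec (B i) (B i))) ∧
    (Matrix.trace (∑ i,
        ((a i) ^ 2 / (a i * euclNorm (B i) / ∑ j, a j * euclNorm (B j))) •
          vecMulVec (B i) (B i))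
      = (∑ i, a i * euclNorm (B i)) ^ 2) ∧
    (∀ π : Fin n → ℝ, (∀ i, 0 < π i) → (∑ i, π i) = 1 →
      Matrix.trace (∑ i, ((a i) ^ 2 / π i) • vecMulVec (B i) (B i))
        = (∑ i, a i * euclNorm (B i)) ^ 2 →
      ∀ i, π i = a i * euclNorm (B i) / ∑ j, a j * euclNorm (B j)) := by
  classical
  set c : Fin n → ℝ := fun i => a i * euclNorm (B i) with hc
  have hcpos : ∀ i, 0 < c i := hpos
  set S : ℝ := ∑ i, c i with hS
  have hSpos : 0 < S :=
    Finset.sum_pos (fun i _ => hcpos i) ⟨⟨0, hn⟩, Finset.mem_univ _⟩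
  have hnorm : ∀ i, euclNorm (B i) ^ 2 = ∑ j, B i j ^ 2 := fun i =>
    Real.sq_sqrt (Finset.sum_nonneg fun j _ => sq_nonneg _)
  -- trace computation
  have htrace : ∀ r : Fin n → ℝ,
      Matrix.trace (∑ i, r i • vecMulVec (B i) (B i))
        = ∑ i, r i * euclNorm (B i) ^ 2 := by
    intro r
    rw [Matrix.trace_sum]
    refine Finset.sum_congr rfl fun i _ => ?_
    rw [Matrix.trace_smul, smul_eq_mul, hnorm]
    congr 1
    simp [Matrix.trace, Matrix.diag, Matrix.vecMulVec_apply, sq]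
  have hterm : ∀ (π : Fin n → ℝ) i,
      a i ^ 2 / π i * euclNorm (B i) ^ 2 = c i ^ 2 / π i := by
    intro π i
    rw [hc, mul_pow]
    ring
  -- key identity
  have key : ∀ π : Fin n → ℝ, (∀ i, 0 < π i) → (∑ i, π i) = 1 →
      ∑ i, c i ^ 2 / π i = S ^ 2 + ∑ i, π i * (c i / π i - S) ^ 2 := by
    intro π hπ hsum
    have h1 : ∀ i ∈ Finset.univ, π i * (c i / π i - S) ^ 2
        = c i ^ 2 / π i - 2 * S * c i + S ^ 2 * π i := by
      intro i _
      have hne : π i ≠ 0 := (hπ i).ne'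
      field_simp
      ring
    rw [Finset.sum_congr rfl h1]
    rw [Finset.sum_add_distrib, Finset.sum_sub_distrib, ← Finset.mul_sum,
      ← Finset.mul_sum, hsum, ← hS]
    ring
  constructor
  · intro π hπ hsum
    rw [htrace]
    calc S ^ 2 ≤ S ^ 2 + ∑ i, π i * (c i / π i - S) ^ 2 := by
          have : 0 ≤ ∑ i, π i * (c i / π i - S) ^ 2 :=
            Finset.sum_nonneg fun i _ => mul_nonneg (hπ i).le (sq_nonneg _)
          linarith
      _ = ∑ i, c i ^ 2 / π i := (key π hπ hsum).symm
      _ = ∑ i, a i ^ 2 / π i * euclNorm (B i) ^ 2 :=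
          Finset.sum_congr rfl fun i _ => (hterm π i).symm
  constructor
  · rw [htrace]
    have : ∀ i ∈ Finset.univ, a i ^ 2 / (c i / S) * euclNorm (B i) ^ 2 = c i * S := by
      intro i _
      rw [hterm (fun i => c i / S) i]
      have hne : c i ≠ 0 := (hcpos i).ne'
      field_simp
    rw [Finset.sum_congr rfl this, ← Finset.sum_mul, ← hS, sq]
  · intro π hπ hsum htr i
    rw [htrace] at htr
    have h2 : ∑ i, c i ^ 2 / π i = ∑ i, a i ^ 2 / π i * euclNorm (B i) ^ 2 :=
      Finset.sum_congr rfl fun i _ => (hterm π i).symm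
    have h3 : S ^ 2 + ∑ i, π i * (c i / π i - S) ^ 2 = S ^ 2 := by
      rw [← key π hπ hsum, h2, htr]
    have h4 : ∑ i, π i * (c i / π i - S) ^ 2 = 0 := by linarith
    have h5 : ∀ j ∈ Finset.univ, π j * (c j / π j - S) ^ 2 = 0 :=
      (Finset.sum_eq_zero_iff_of_nonneg
        (fun j _ => mul_nonneg (hπ j).le (sq_nonneg _))).mp h4
    have h6 := h5 i (Finset.mem_univ i)
    have h7 : (c i / π i - S) ^ 2 = 0 := by
      rcases mul_eq_zero.mp h6 with h | h
      · exact absurd h (hπ i).ne'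
      · exact h
    have h8 : c i / π i = S := by
      have := pow_eq_zero_iff (n := 2) (by norm_num) |>.mp h7
      linarith
    have h9 : a i * euclNorm (B i) = c i := rfl
    rw [div_eq_iff (hπ i).ne'] at h8
    rw [h9, eq_div_iff hSpos.ne']
    linarith
end

section
/- Let n, k ≥ 1, let B : Fin n → ℝ^k span ℝ^k, let y : Fin n → ℝ with y i > 0 for all i, let λ ≥ 0, and let D be a symmetric positive semidefinite k × k real matrix. Then the function L(θ) = ∑ i, ( (y i)·exp(−⟪B i, θ⟫) + (y i)⁻¹·exp(⟪B i, θ⟫) − 2 ) + (λ/2)·⟪θ, D θ⟫ attains its global minimum on ℝ^k at a unique point θ̂ ∈ ℝ^k. -/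
open Matrix Real Filter

lemma exp_mid_lt {a b : ℝ} (hab : a ≠ b) :
    Real.exp ((a + b) / 2) < (Real.exp a + Real.exp b) / 2 := by
  have h := strictConvexOn_exp.2 (Set.mem_univ a) (Set.mem_univ b) hab
      (by norm_num : (0:ℝ) < 1/2) (by norm_num : (0:ℝ) < 1/2) (by norm_num)
  simp only [smul_eq_mul] at h
  have : (a + b) / 2 = 1/2 * a + 1/2 * b := by ring
  rw [this]; linarith

lemma term_mid_lt {c a b : ℝ} (hc : 0 < c) (hab : a ≠ b) :
    c * Real.exp (-((a + b) / 2)) + c⁻¹ * Real.exp ((a + b) / 2)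
      < ((c * Real.exp (-a) + c⁻¹ * Real.exp a) + (c * Real.exp (-b) + c⁻¹ * Real.exp b)) / 2 := by
  have h1 := exp_mid_lt hab
  have h2 := exp_mid_lt (a := -a) (b := -b) (by simpa using fun h => hab (neg_injective h))
  have hne : -((a + b) / 2) = (-a + -b) / 2 := by ring
  rw [hne]
  have hc' : 0 < c⁻¹ := inv_pos.mpr hc
  nlinarith [mul_lt_mul_of_pos_left h1 hc', mul_lt_mul_of_pos_left h2 hc]

lemma term_mid_le {c a b : ℝ} (hc : 0 < c) :
    c * Real.exp (-((a + b) / 2)) + c⁻¹ * Real.exp ((a + b) / 2)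
      ≤ ((c * Real.exp (-a) + c⁻¹ * Real.exp a) + (c * Real.exp (-b) + c⁻¹ * Real.exp b)) / 2 := by
  rcases eq_or_ne a b with rfl | hab
  · have : (a + a) / 2 = a := by ring
    rw [this]; linarith
  · exact (term_mid_lt hc hab).le

lemma pen_mid_le {k : ℕ} (D : Matrix (Fin k) (Fin k) ℝ) (hD : D.PosSemidef) (x y : Fin k → ℝ) :
    ((1/2 : ℝ) • (x + y)) ⬝ᵥ D *ᵥ ((1/2 : ℝ) • (x + y))
      ≤ (x ⬝ᵥ D *ᵥ x + y ⬝ᵥ D *ᵥ y) / 2 := by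
  have hsym : x ⬝ᵥ D *ᵥ y = y ⬝ᵥ D *ᵥ x := by
    have h : Dᵀ = D := hD.isHermitian
    rw [dotProduct_mulVec, ← mulVec_transpose, h, dotProduct_comm]
  have hQ : 0 ≤ (x - y) ⬝ᵥ D *ᵥ (x - y) := by simpa using hD.re_dotProduct_nonneg (x - y)
  simp only [mulVec_smul, mulVec_add, smul_dotProduct, dotProduct_smul, add_dotProduct,
    dotProduct_add, sub_dotProduct, dotProduct_sub, mulVec_sub, smul_eq_mul] at *
  nlinarith [hQ]

/-- Each LPRE summand is nonnegative. -/
lemma term_nonneg {c u : ℝ} (hc : 0 < c) :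
    0 ≤ c * Real.exp (-u) + c⁻¹ * Real.exp u - 2 := by
  have h1 : (c * Real.exp (-u)) * (c⁻¹ * Real.exp u) = 1 := by
    rw [Real.exp_neg]
    field_simp
  nlinarith [sq_nonneg (c * Real.exp (-u) - 1), mul_pos hc (Real.exp_pos (-u)),
    mul_pos (inv_pos.mpr hc) (Real.exp_pos u)]

/-- Lower bound on each LPRE summand. -/
lemma term_lb {c u m : ℝ} (hm : 0 < m) (h1 : m ≤ c) (h2 : m ≤ c⁻¹) :
    m * Real.exp |u| - 2 ≤ c * Real.exp (-u) + c⁻¹ * Real.exp u - 2 := by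
  have hexp : Real.exp |u| ≤ Real.exp (-u) + Real.exp u := by
    rcases abs_cases u with ⟨h, _⟩ | ⟨h, _⟩
    · rw [h]; nlinarith [Real.exp_pos (-u)]
    · rw [h]; nlinarith [Real.exp_pos u]
  nlinarith [Real.exp_pos (-u), Real.exp_pos u, Real.exp_pos |u|]

set_option maxHeartbeats 1000000 in
/-- When the design vectors span `ℝ^k`, the penalized functional LPRE loss
attains its global minimum at a unique point. -/
theorem stmt9 (n k : ℕ) (hn : 1 ≤ n) (hk : 1 ≤ k)
    (B : Fin n → Fin k → ℝ) (hB : Submodule.span ℝ (Set.range B) = ⊤)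
    (y : Fin n → ℝ) (hy : ∀ i, 0 < y i)
    (lam : ℝ) (hlam : 0 ≤ lam)
    (D : Matrix (Fin k) (Fin k) ℝ) (hD : D.PosSemidef) :
    ∃! θhat : Fin k → ℝ, ∀ θ : Fin k → ℝ,
      (∑ i, (y i * Real.exp (-(B i ⬝ᵥ θhat)) + (y i)⁻¹ * Real.exp (B i ⬝ᵥ θhat) - 2))
          + lam / 2 * (θhat ⬝ᵥ (D *ᵥ θhat))
        ≤ (∑ i, (y i * Real.exp (-(B i ⬝ᵥ θ)) + (y i)⁻¹ * Real.exp (B i ⬝ᵥ θ) - 2))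
          + lam / 2 * (θ ⬝ᵥ (D *ᵥ θ)) := by
  haveI : Nonempty (Fin n) := ⟨⟨0, hn⟩⟩
  set L : (Fin k → ℝ) → ℝ := fun θ =>
    (∑ i, (y i * Real.exp (-(B i ⬝ᵥ θ)) + (y i)⁻¹ * Real.exp (B i ⬝ᵥ θ) - 2))
      + lam / 2 * (θ ⬝ᵥ (D *ᵥ θ)) with hLdef
  show ∃! θhat, ∀ θ, L θhat ≤ L θ
  -- positivity of the penalty
  have hQ : ∀ v : Fin k → ℝ, 0 ≤ v ⬝ᵥ D *ᵥ v := fun v => by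
    simpa using hD.re_dotProduct_nonneg v
  -- if two vectors differ, some design vector separates them
  have hdiff : ∀ x z : Fin k → ℝ, x ≠ z → ∃ i, B i ⬝ᵥ x ≠ B i ⬝ᵥ z := by
    intro x z hxz
    by_contra h
    push_neg at h
    apply hxz
    have hker : ∀ v ∈ Submodule.span ℝ (Set.range B), v ⬝ᵥ (x - z) = 0 := by
      intro v hv
      induction hv using Submodule.span_induction with
      | mem v hv =>
          obtain ⟨i, rfl⟩ := hv
          rw [dotProduct_sub, h i, sub_self]
      | zero => simp
      | add a b _ _ ha hb =>
          rw [add_dotProduct]; simp only [dotProduct_sub] at ha hb ⊢; linarith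
      | smul c a _ ha =>
          rw [smul_dotProduct, smul_eq_mul]
          rw [dotProduct_sub] at ha ⊢
          linear_combination c * ha
    have h0 : (x - z) ⬝ᵥ (x - z) = 0 := hker (x - z) (by rw [hB]; trivial)
    have := dotProduct_self_eq_zero.mp h0
    exact sub_eq_zero.mp this
  -- the linear design map and its antilipschitz constant
  let T : (Fin k → ℝ) →ₗ[ℝ] (Fin n → ℝ) :=
    { toFun := fun θ => fun i => B i ⬝ᵥ θ
      map_add' := by intro a b; funext i; simp [dotProduct_add]
      map_smul' := by intro c a; funext i; simp [dotProduct_smul] }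
  have hker : LinearMap.ker T = ⊥ := by
    rw [LinearMap.ker_eq_bot]
    intro a b hab
    by_contra hne
    obtain ⟨i, hi⟩ := hdiff a b hne
    exact hi (congrFun hab i)
  obtain ⟨K, hK0, hKa⟩ := T.exists_antilipschitzWith hker
  have hTθ : ∀ θ : Fin k → ℝ, ‖θ‖ ≤ K * ‖T θ‖ := fun θ => by
    simpa [dist_eq_norm, map_zero] using hKa.le_mul_dist θ 0
  -- a uniform positive lower bound for the weights
  obtain ⟨m, hm0, hmle⟩ : ∃ m : ℝ, 0 < m ∧ ∀ i, m ≤ y i ∧ m ≤ (y i)⁻¹ := by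
    refine ⟨Finset.univ.inf' Finset.univ_nonempty (fun i => min (y i) (y i)⁻¹), ?_, fun i => ⟨?_, ?_⟩⟩
    · rw [Finset.lt_inf'_iff]
      intro i _
      exact lt_min (hy i) (inv_pos.mpr (hy i))
    · exact le_trans (Finset.inf'_le _ (Finset.mem_univ i)) (min_le_left _ _)
    · exact le_trans (Finset.inf'_le _ (Finset.mem_univ i)) (min_le_right _ _)
  -- coercivity lower bound
  have hbound : ∀ θ : Fin k → ℝ, m * Real.exp ((K : ℝ)⁻¹ * ‖θ‖) - 2 ≤ L θ := by
    intro θ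
    -- find the coordinate attaining the sup norm of T θ
    obtain ⟨j, -, hj⟩ := Finset.exists_mem_eq_sup Finset.univ Finset.univ_nonempty
      (fun i => ‖(T θ) i‖₊)
    have hTj : (T θ) j = B j ⬝ᵥ θ := rfl
    have hnorm : ‖T θ‖ = |B j ⬝ᵥ θ| := by
      rw [Pi.norm_def, hj, coe_nnnorm, hTj, Real.norm_eq_abs]
    have hKinv : (K : ℝ)⁻¹ * ‖θ‖ ≤ |B j ⬝ᵥ θ| := by
      rw [← hnorm]
      rw [inv_mul_le_iff₀ (by exact_mod_cast hK0)]
      exact hTθ θ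
    have hterm : m * Real.exp ((K : ℝ)⁻¹ * ‖θ‖) - 2
        ≤ y j * Real.exp (-(B j ⬝ᵥ θ)) + (y j)⁻¹ * Real.exp (B j ⬝ᵥ θ) - 2 := by
      calc m * Real.exp ((K : ℝ)⁻¹ * ‖θ‖) - 2
          ≤ m * Real.exp |B j ⬝ᵥ θ| - 2 := by
            have := Real.exp_le_exp.mpr hKinv
            nlinarith
        _ ≤ _ := term_lb hm0 (hmle j).1 (hmle j).2
    have hsum : y j * Real.exp (-(B j ⬝ᵥ θ)) + (y j)⁻¹ * Real.exp (B j ⬝ᵥ θ) - 2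
        ≤ ∑ i, (y i * Real.exp (-(B i ⬝ᵥ θ)) + (y i)⁻¹ * Real.exp (B i ⬝ᵥ θ) - 2) :=
      Finset.single_le_sum (f := fun i => y i * Real.exp (-(B i ⬝ᵥ θ)) + (y i)⁻¹ * Real.exp (B i ⬝ᵥ θ) - 2) (fun i _ => term_nonneg (hy i)) (Finset.mem_univ j)
    have hpen : 0 ≤ lam / 2 * (θ ⬝ᵥ D *ᵥ θ) :=
      mul_nonneg (by linarith) (hQ θ)
    simp only [hLdef]
    linarith
  -- continuity
  have hBc : ∀ i, Continuous fun θ : Fin k → ℝ => B i ⬝ᵥ θ := by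
    intro i
    simp only [dotProduct]
    exact continuous_finset_sum _ fun j _ => continuous_const.mul (continuous_apply j)
  have hcont : Continuous L := by
    apply Continuous.add
    · apply continuous_finset_sum
      intro i _
      exact ((continuous_const.mul (Real.continuous_exp.comp (hBc i).neg)).add
        (continuous_const.mul (Real.continuous_exp.comp (hBc i)))).sub continuous_const
    · apply continuous_const.mul
      simp only [dotProduct, Matrix.mulVec]
      exact continuous_finset_sum _ fun j _ => (continuous_apply j).mul
        (continuous_finset_sum _ fun l _ => continuous_const.mul (continuous_apply l))
  -- coercivity
  have hco : Tendsto L (cocompact (Fin k → ℝ)) atTop := by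
    apply tendsto_atTop_mono hbound
    apply tendsto_atTop_add_const_right
    apply Tendsto.const_mul_atTop hm0
    apply Real.tendsto_exp_atTop.comp
    apply Tendsto.const_mul_atTop (by positivity : (0:ℝ) < (K : ℝ)⁻¹)
    exact tendsto_norm_cocompact_atTop
  -- existence of a minimizer
  obtain ⟨θhat, hθhat⟩ := hcont.exists_forall_le hco
  refine ⟨θhat, hθhat, ?_⟩
  -- uniqueness via midpoint strict convexity
  intro θ' h'
  by_contra hne
  set z : Fin k → ℝ := (1/2 : ℝ) • (θ' + θhat) with hzdef
  have hBz : ∀ i, B i ⬝ᵥ z = (B i ⬝ᵥ θ' + B i ⬝ᵥ θhat) / 2 := by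
    intro i
    rw [hzdef, dotProduct_smul, dotProduct_add, smul_eq_mul]
    ring
  have hsum_lt : ∑ i, (y i * Real.exp (-(B i ⬝ᵥ z)) + (y i)⁻¹ * Real.exp (B i ⬝ᵥ z) - 2)
      < (∑ i, (y i * Real.exp (-(B i ⬝ᵥ θ')) + (y i)⁻¹ * Real.exp (B i ⬝ᵥ θ') - 2)
          + ∑ i, (y i * Real.exp (-(B i ⬝ᵥ θhat)) + (y i)⁻¹ * Real.exp (B i ⬝ᵥ θhat) - 2)) / 2 := by
    obtain ⟨i0, hi0⟩ := hdiff θ' θhat hne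
    rw [← Finset.sum_add_distrib, Finset.sum_div]
    apply Finset.sum_lt_sum
    · intro i _
      rw [hBz i]
      have := term_mid_le (a := B i ⬝ᵥ θ') (b := B i ⬝ᵥ θhat) (hy i)
      linarith
    · refine ⟨i0, Finset.mem_univ i0, ?_⟩
      rw [hBz i0]
      have := term_mid_lt (a := B i0 ⬝ᵥ θ') (b := B i0 ⬝ᵥ θhat) (hy i0) hi0
      linarith
  have hpen_le : lam / 2 * (z ⬝ᵥ D *ᵥ z)
      ≤ (lam / 2 * (θ' ⬝ᵥ D *ᵥ θ') + lam / 2 * (θhat ⬝ᵥ D *ᵥ θhat)) / 2 := by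
    have := pen_mid_le D hD θ' θhat
    have hl2 : 0 ≤ lam / 2 := by linarith
    rw [hzdef]
    nlinarith [mul_le_mul_of_nonneg_left this hl2]
  have hLz : L z < (L θ' + L θhat) / 2 := by
    simp only [hLdef]
    linarith
  have h1 : L θhat ≤ L z := hθhat z
  have h2 : L θ' ≤ L z := h' z
  clear_value L z
  linarith
end
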